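/- Let N ≥ 3. In the wheel poset H_N, for each i ∈ [N], the element r_{i+1,i-1} (indices mod N, representatives in [N]) is below r_{j,j} if and only if j ≠ i. Consequently, the subposet induced by {r_{i+1,i-1} : i ∈ [N]} ∪ {r_{j,j} : j ∈ [N]} is isomorphic to the standard example S_N. -/

import Mathlib

/-- The cyclic interval ⟨i,j⟩ inside {1,…,N}: elements k with (k−i) mod N ≤ (j−i) mod N. -/
def cyc (N i j : ℕ) : Finset ℕ :=
  (Finset.Icc 1 N).filter (fun k => (k + N - i) % N ≤ (j + N - i) % N)

/-- Index pairs (i,j) of wheel elements: i,j ∈ [N] with j+1 ≢ i (mod N). -/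
def wheelPairs (N : ℕ) : Finset (ℕ × ℕ) :=
  (Finset.Icc 1 N ×ˢ Finset.Icc 1 N).filter (fun p => (p.2 + 1) % N ≠ p.1 % N)

/-- Ground set of the wheel H_N: the elements r_{i,j} (as `some (i,j)`) plus `none` = min. -/
def wheelGround (N : ℕ) : Finset (Option (ℕ × ℕ)) :=
  insert none ((wheelPairs N).image some)

/-- Order of the wheel: min below all, r_{i,j} ≤ r_{i',j'} iff ⟨i',j'⟩ ⊆ ⟨i,j⟩. -/
def wheelLe (N : ℕ) : Option (ℕ × ℕ) → Option (ℕ × ℕ) → Prop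
  | none, _ => True
  | some _, none => False
  | some p, some q => cyc N q.1 q.2 ⊆ cyc N p.1 p.2

/-- The (reflexive) order of the standard example S_k on Fin k ⊕ Fin k:
`inl i` is a_i, `inr j` is b_j, with a_i ≤ b_j iff i ≠ j. -/
def stdLe (k : ℕ) : (Fin k ⊕ Fin k) → (Fin k ⊕ Fin k) → Prop
  | .inl i, .inl j => i = j
  | .inl i, .inr j => i ≠ j
  | .inr _, .inl _ => False
  | .inr i, .inr j => i = j

/-- `r` has a realizer of size `n`: n linear orders whose intersection is `r`. -/
def realizes {α : Type*} (r : α → α → Prop) (n : ℕ) : Prop :=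
  ∃ L : Fin n → α → α → Prop, (∀ m, IsLinearOrder α (L m)) ∧
    ∀ a b, r a b ↔ ∀ m, L m a b

/-- Order dimension of the relation `r`. -/
noncomputable def odim {α : Type*} (r : α → α → Prop) : ℕ :=
  sInf {n | realizes r n}

/-!
Inside `[N]`, the interval `⟨j, j⟩` is the singleton `{j}` and `⟨i+1, i-1⟩` is `[N] \ {i}`.
The order of `H_N` being reverse inclusion of intervals, `r_{i+1,i-1} ≤ r_{j,j}` says `j ≠ i`,
two distinct co-singletons are incomparable, two singletons are incomparable, and for `N ≥ 3`
a co-singleton (of size `N - 1 ≥ 2`) is never inside a singleton: exactly the order of `S_N`.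
-/

open Finset

lemma Nat.mod_eq_ite_of_lt_two_mul {x N : ℕ} (hx : x < 2 * N) :
    x % N = if x < N then x else x - N := by
  split_ifs with h
  · exact Nat.mod_eq_of_lt h
  · rw [Nat.mod_eq_sub_mod (by omega), Nat.mod_eq_of_lt (by omega)]

lemma mem_cyc {N i j k : ℕ} :
    k ∈ cyc N i j ↔ k ∈ Icc 1 N ∧ (k + N - i) % N ≤ (j + N - i) % N :=
  mem_filter

lemma cyc_self {N j : ℕ} (hj : j ∈ Icc 1 N) : cyc N j j = {j} := by
  rw [mem_Icc] at hj
  ext k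
  rw [mem_cyc, mem_singleton, mem_Icc]
  constructor
  · rintro ⟨hk, h⟩
    rw [Nat.mod_eq_ite_of_lt_two_mul (by omega), Nat.mod_eq_ite_of_lt_two_mul (by omega)] at h
    split_ifs at h <;> omega
  · rintro rfl
    exact ⟨hj, le_rfl⟩

lemma mod_add_one_eq {N i : ℕ} (hi : i ∈ Icc 1 N) :
    i % N + 1 = if i = N then 1 else i + 1 := by
  rw [mem_Icc] at hi
  rw [Nat.mod_eq_ite_of_lt_two_mul (by omega)]
  split_ifs <;> omega

lemma add_sub_two_mod_add_one_eq {N i : ℕ} (hi : i ∈ Icc 1 N) :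
    (i + N - 2) % N + 1 = if i = 1 then N else i - 1 := by
  rw [mem_Icc] at hi
  rw [Nat.mod_eq_ite_of_lt_two_mul (by omega)]
  split_ifs <;> omega

lemma cyc_succ_pred {N i : ℕ} (hN : 2 ≤ N) (hi : i ∈ Icc 1 N) :
    cyc N (i % N + 1) ((i + N - 2) % N + 1) = (Icc 1 N).erase i := by
  ext k
  rw [mem_cyc, mem_erase, and_comm (a := k ≠ i)]
  refine and_congr_right fun hk => ?_
  rw [mod_add_one_eq hi, add_sub_two_mod_add_one_eq hi]
  rw [mem_Icc] at hi hk
  split_ifs <;>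
    rw [Nat.mod_eq_ite_of_lt_two_mul (by omega), Nat.mod_eq_ite_of_lt_two_mul (by omega)] <;>
    split_ifs <;> omega

lemma some_mem_wheelGround {N a b : ℕ} (ha : a ∈ Icc 1 N) (hb : b ∈ Icc 1 N)
    (hba : b + 1 ≠ a) (hwrap : ¬(b = N ∧ a = 1)) : some (a, b) ∈ wheelGround N := by
  refine mem_insert_of_mem (mem_image_of_mem _ (mem_filter.2 ⟨mem_product.2 ⟨ha, hb⟩, ?_⟩))
  rw [mem_Icc] at ha hb
  rw [Nat.mod_eq_ite_of_lt_two_mul (by omega), Nat.mod_eq_ite_of_lt_two_mul (by omega)]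
  split_ifs <;> omega

lemma wheelLe_refl (N : ℕ) (x : Option (ℕ × ℕ)) : wheelLe N x x := by
  cases x
  · trivial
  · exact subset_rfl

lemma stdLe_antisymm {k : ℕ} {x y : Fin k ⊕ Fin k} (hxy : stdLe k x y) (hyx : stdLe k y x) :
    x = y := by
  rcases x with i | i <;> rcases y with j | j <;> simp_all [stdLe]

lemma Finset.erase_subset_erase_iff_of_mem {α : Type*} [DecidableEq α] {s : Finset α} {a b : α}
    (hb : b ∈ s) : s.erase a ⊆ s.erase b ↔ a = b := by
  refine ⟨fun h => ?_, fun h => h ▸ subset_rfl⟩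
  by_contra hab
  exact (mem_erase.1 (h (mem_erase.2 ⟨Ne.symm hab, hb⟩))).1 rfl

lemma Finset.not_erase_subset_singleton {α : Type*} [DecidableEq α] {s : Finset α} (a b : α)
    (hs : 3 ≤ s.card) : ¬s.erase a ⊆ {b} := fun h => by
  have := (pred_card_le_card_erase (a := a)).trans (card_le_card h)
  rw [card_singleton] at this
  omega

/-- `a_i ↦ r_{i+1,i-1}` and `b_j ↦ r_{j,j}`, shifted from `Fin N` to `[N]`. -/
def standardExampleToWheel (N : ℕ) : Fin N ⊕ Fin N → Option (ℕ × ℕ) :=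
  Sum.elim (fun i => some (((i : ℕ) + 1) % N + 1, ((i : ℕ) + 1 + N - 2) % N + 1))
    (fun j => some ((j : ℕ) + 1, (j : ℕ) + 1))

lemma val_add_one_mem_Icc {N : ℕ} (i : Fin N) : (i : ℕ) + 1 ∈ Icc 1 N :=
  mem_Icc.2 ⟨by omega, i.isLt⟩

lemma standardExampleToWheel_mem (N : ℕ) (hN : 2 ≤ N) (x : Fin N ⊕ Fin N) :
    standardExampleToWheel N x ∈ wheelGround N := by
  rcases x with i | j
  · have hi := val_add_one_mem_Icc i
    rw [standardExampleToWheel, Sum.elim_inl, mod_add_one_eq hi, add_sub_two_mod_add_one_eq hi]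
    rw [mem_Icc] at hi
    apply some_mem_wheelGround <;> split_ifs <;> first | omega | exact mem_Icc.2 (by omega)
  · have hj := val_add_one_mem_Icc j
    exact some_mem_wheelGround hj hj (by omega) (by omega)

lemma stdLe_iff_wheelLe (N : ℕ) (hN : 3 ≤ N) (x y : Fin N ⊕ Fin N) :
    stdLe N x y ↔ wheelLe N (standardExampleToWheel N x) (standardExampleToWheel N y) := by
  have hcard : 3 ≤ (Icc 1 N).card := by simpa using hN
  rcases x with i | i <;> rcases y with j | j <;>
    simp only [stdLe, standardExampleToWheel, Sum.elim_inl, Sum.elim_inr, wheelLe] <;>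
    simp only [cyc_self (val_add_one_mem_Icc _),
      cyc_succ_pred (by omega : 2 ≤ N) (val_add_one_mem_Icc _)]
  · rw [erase_subset_erase_iff_of_mem (val_add_one_mem_Icc i), Fin.ext_iff]
    omega
  · rw [singleton_subset_iff, mem_erase, and_iff_left (val_add_one_mem_Icc j), ne_eq, ne_eq,
      Fin.ext_iff]
    omega
  · simp only [false_iff]
    exact not_erase_subset_singleton _ _ hcard
  · rw [singleton_subset_singleton, Fin.ext_iff]
    omega

lemma standardExampleToWheel_injective (N : ℕ) (hN : 3 ≤ N) :
    Function.Injective (standardExampleToWheel N) := fun x y hxy => by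
  have hle (x y) (h : standardExampleToWheel N x = standardExampleToWheel N y) : stdLe N x y :=
    (stdLe_iff_wheelLe N hN x y).2 (h ▸ wheelLe_refl N _)
  exact stdLe_antisymm (hle x y hxy) (hle y x hxy.symm)

theorem wheel_contains_standard_example (N : ℕ) (hN : 3 ≤ N) :
    (∀ i ∈ Finset.Icc 1 N, ∀ j ∈ Finset.Icc 1 N,
      (wheelLe N (some (i % N + 1, (i + N - 2) % N + 1)) (some (j, j)) ↔ j ≠ i)) ∧
    (∃ f : (Fin N ⊕ Fin N) → Option (ℕ × ℕ),
      (∀ x, f x ∈ wheelGround N) ∧ Function.Injective f ∧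
      ∀ x y, stdLe N x y ↔ wheelLe N (f x) (f y)) := by
  refine ⟨fun i hi j hj => ?_, standardExampleToWheel N, standardExampleToWheel_mem N (by omega),
    standardExampleToWheel_injective N hN, stdLe_iff_wheelLe N hN⟩
  change cyc N j j ⊆ _ ↔ _
  rw [cyc_self hj, cyc_succ_pred (by omega) hi, singleton_subset_iff, mem_erase]
  exact and_iff_left hj
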